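/- For any two incomparable elements of a finite partial order there exist two linearizations differing only by swapping those elements at adjacent positions: let ≤ be a partial order on a finite set E and let x, y ∈ E be incomparable (x ≠ y, ¬(x ≤ y), ¬(y ≤ x)). Then there exist words u and v (lists over E) such that both u ++ [x, y] ++ v and u ++ [y, x] ++ v are linear extensions of ≤. -/

import Mathlib

/-- `L` is a linear extension of the partial order `≤` on the finite type `E`. -/
def IsLinExt {E : Type*} [PartialOrder E] (L : List E) : Prop :=
  L.Nodup ∧ (∀ x : E, x ∈ L) ∧
    ∀ a b : E, a ≤ b → a ≠ b → List.Sublist [a, b] L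

/-- `x` and `y` are incomparable under the partial order. -/
def Incomp {E : Type*} [PartialOrder E] (x y : E) : Prop :=
  x ≠ y ∧ ¬ x ≤ y ∧ ¬ y ≤ x

/-! Sort the elements strictly below `x` or `y` along a linear extension of `≤`, and likewise the
elements below neither, and put `x, y` between the two blocks. The first block, and the first
block together with `x, y`, are down-closed, so no element of the list lies below an earlier
one; this holds whichever order `x` and `y` appear in, as they are incomparable. -/

open List

theorem List.Pairwise.pair_sublist {α : Type*} {R : α → α → Prop} {L : List α} {a b : α}
    (hL : L.Pairwise R) (ha : a ∈ L) (hb : b ∈ L) (hne : a ≠ b) (hba : ¬ R b a) :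
    [a, b] <+ L := by
  induction hL with
  | nil => simp at ha
  | @cons c t hc _ ih =>
    rcases mem_cons.mp ha with rfl | ha_t
    · exact (singleton_sublist.mpr ((mem_cons.mp hb).resolve_left hne.symm)).cons_cons a
    rcases mem_cons.mp hb with rfl | hb_t
    · exact absurd (hc a ha_t) hba
    · exact (ih ha_t hb_t).cons c

section

variable {E : Type*} [PartialOrder E]

theorem Incomp.symm {x y : E} (h : Incomp x y) : Incomp y x :=
  ⟨h.1.symm, h.2.2, h.2.1⟩

theorem isLinExt_of_pairwise {L : List E} (hmem : ∀ x, x ∈ L)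
    (hL : L.Pairwise fun a b => ¬ b ≤ a) : IsLinExt L :=
  ⟨hL.imp fun h => (ne_of_not_le h).symm, hmem, fun a b hab hne =>
    hL.pair_sublist (hmem a) (hmem b) hne (not_not_intro hab)⟩

theorem List.Pairwise.append_of_isLowerSet {l₁ l₂ : List E}
    (h₁ : l₁.Pairwise fun a b => ¬ b ≤ a) (h₂ : l₂.Pairwise fun a b => ¬ b ≤ a)
    (hlow : IsLowerSet {z | z ∈ l₁}) (hdisj : ∀ b ∈ l₂, b ∉ l₁) :
    (l₁ ++ l₂).Pairwise fun a b => ¬ b ≤ a :=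
  pairwise_append.mpr ⟨h₁, h₂, fun _ ha b hb hba => hdisj b hb (hlow hba ha)⟩

theorem Set.Finite.exists_list_pairwise_not_ge {s : Set E} (hs : s.Finite) :
    ∃ l : List E, (∀ z, z ∈ l ↔ z ∈ s) ∧ l.Pairwise fun a b => ¬ b ≤ a := by
  classical
  let r : E → E → Prop := fun a b => toLinearExtension a ≤ toLinearExtension b
  have : IsTrans E r := ⟨fun _ _ _ => le_trans⟩
  have : Std.Antisymm r := ⟨fun _ _ => le_antisymm⟩
  have : Std.Total r := ⟨fun _ _ => le_total _ _⟩
  refine ⟨hs.toFinset.sort r, fun z => by simp, ?_⟩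
  refine ((Finset.pairwise_sort _ r).and (Finset.sort_nodup _ r)).imp fun ⟨hab, hne⟩ hba => ?_
  exact hne (le_antisymm (α := LinearExtension E) hab (toLinearExtension.monotone hba))

theorem isLinExt_append_pair_append {x y : E} (hxy : Incomp x y) {u v : List E}
    (hu_mem : ∀ z, z ∈ u ↔ z < x ∨ z < y) (hv_mem : ∀ z, z ∈ v ↔ ¬ z ≤ x ∧ ¬ z ≤ y)
    (hu : u.Pairwise fun a b => ¬ b ≤ a) (hv : v.Pairwise fun a b => ¬ b ≤ a) :
    IsLinExt (u ++ [x, y] ++ v) := by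
  obtain ⟨hne, hnxy, hnyx⟩ := hxy
  have hlow_mem : ∀ z, z ∈ u ++ [x, y] ↔ z ≤ x ∨ z ≤ y := by
    intro z
    simp only [mem_append, hu_mem, mem_cons, not_mem_nil, le_iff_lt_or_eq]
    tauto
  refine isLinExt_of_pairwise (fun z => ?_) ?_
  · rw [mem_append, hlow_mem, hv_mem]
    tauto
  refine Pairwise.append_of_isLowerSet ?_ hv ?_ ?_
  · refine Pairwise.append_of_isLowerSet hu (pairwise_pair.mpr hnyx) ?_ ?_
    · exact fun a b hba ha => (hu_mem b).2 (((hu_mem a).1 ha).imp hba.trans_lt hba.trans_lt)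
    · simp [hu_mem, hnxy, hnyx, lt_iff_le_and_ne]
  · exact fun a b hba ha => (hlow_mem b).2 (((hlow_mem a).1 ha).imp hba.trans hba.trans)
  · intro b hb hlow
    obtain ⟨hbx, hby⟩ := (hv_mem b).1 hb
    exact ((hlow_mem b).1 hlow).elim hbx hby

end

/-- Any two incomparable elements of a finite partial order appear adjacently
(in either order) in a pair of linear extensions that differ only by swapping
them. -/
theorem incomparable_adjacent_linearizations {E : Type*} [Fintype E]
    [PartialOrder E] (x y : E) (hxy : Incomp x y) :
    ∃ u v : List E, IsLinExt (u ++ [x, y] ++ v) ∧ IsLinExt (u ++ [y, x] ++ v) := by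
  obtain ⟨u, hu_mem, hu⟩ := (Set.toFinite {z | z < x ∨ z < y}).exists_list_pairwise_not_ge
  obtain ⟨v, hv_mem, hv⟩ := (Set.toFinite {z | ¬ z ≤ x ∧ ¬ z ≤ y}).exists_list_pairwise_not_ge
  exact ⟨u, v, isLinExt_append_pair_append hxy hu_mem hv_mem hu hv,
    isLinExt_append_pair_append hxy.symm (fun z => (hu_mem z).trans or_comm)
      (fun z => (hv_mem z).trans and_comm) hu hv⟩
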